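/- arXiv:2108.07042 — 6 statements merged into one kernel-verified Lean document; each statement's English description precedes it below -/
import Mathlib

section
/- Let A be a finite set of k integers such that A ∩ (−A) = ∅ (i.e., no element of A is the negative of an element of A). Then for any integer α with 0 ≤ α ≤ k, the number of distinct subset sums of A coming from subsets of size at least α satisfies |Σ_α(A)| ≥ k(k+1)/2 − α(α+1)/2 + 1. -/
/-!
Induct on `|A|`. Remove an element `a` of maximal absolute value; after negating `A` if necessary,
`a > 0`, and `|x| < a` for all other `x ∈ A` because `A ∩ (-A) = ∅`. If `M = ∑ S` is the largest
element of `Σ_α(A \ {a})`, then `M + a`, the sums `M + a - x` (`x ∈ S`) and `M + a + x`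
(`x ∉ S`) are `|A|` elements of `Σ_α(A)` exceeding `M`, pairwise distinct again because
`A ∩ (-A) = ∅`. Hence `|Σ_α(A)| ≥ |Σ_α(A \ {a})| + |A|`; summing these increments down to
`|A| = α`, where `Σ_α(A)` is nonempty, gives the bound.
-/

/-- `sigmaAtLeast A α` is the set of all subset sums of `A` coming from
subsets of size at least `α`. -/
def sigmaAtLeast (A : Finset ℤ) (α : ℕ) : Finset ℤ :=
  (A.powerset.filter (fun B => α ≤ B.card)).image (fun B => B.sum id)

open Finset
open scoped Pointwise

lemma Finset.neg_notMem_of_disjoint_neg {G : Type*} [DecidableEq G] [InvolutiveNeg G]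
    {A : Finset G} {x : G} (hA : Disjoint A (-A)) (hx : x ∈ A) : -x ∉ A :=
  fun h => disjoint_left.1 hA hx (mem_neg'.2 h)

lemma Finset.injOn_ite_neg {G : Type*} [DecidableEq G] [InvolutiveNeg G] {A S : Finset G}
    (hA : Disjoint A (-A)) :
    Set.InjOn (fun x => if x ∈ S then -x else x) A := by
  intro x hx y hy hxy
  by_cases hxS : x ∈ S <;> by_cases hyS : y ∈ S <;> simp only [hxS, hyS, if_true, if_false] at hxy
  · exact neg_injective hxy
  · exact absurd (hxy ▸ hy) (neg_notMem_of_disjoint_neg hA hx)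
  · exact absurd (hxy ▸ hx) (neg_notMem_of_disjoint_neg hA hy)
  · exact hxy

section SigmaAtLeast

variable {A B S : Finset ℤ} {α : ℕ} {a x : ℤ}

lemma mem_sigmaAtLeast {s : ℤ} : s ∈ sigmaAtLeast A α ↔ ∃ B ⊆ A, α ≤ #B ∧ B.sum id = s := by
  simp [sigmaAtLeast, and_assoc]

lemma sum_mem_sigmaAtLeast (hB : B ⊆ A) (hα : α ≤ #B) : B.sum id ∈ sigmaAtLeast A α :=
  mem_sigmaAtLeast.2 ⟨B, hB, hα, rfl⟩

lemma sigmaAtLeast_nonempty (hα : α ≤ #A) : (sigmaAtLeast A α).Nonempty :=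
  ⟨_, sum_mem_sigmaAtLeast subset_rfl hα⟩

lemma sigmaAtLeast_mono (h : A ⊆ B) : sigmaAtLeast A α ⊆ sigmaAtLeast B α := by
  intro s hs
  obtain ⟨C, hC, hα, rfl⟩ := mem_sigmaAtLeast.1 hs
  exact sum_mem_sigmaAtLeast (hC.trans h) hα

lemma neg_mem_sigmaAtLeast_neg {s : ℤ} (hs : s ∈ sigmaAtLeast A α) :
    -s ∈ sigmaAtLeast (-A) α := by
  obtain ⟨B, hBA, hα, rfl⟩ := mem_sigmaAtLeast.1 hs
  refine mem_sigmaAtLeast.2 ⟨-B, neg_subset_neg hBA, by rwa [card_neg], ?_⟩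
  rw [sum_neg_index]
  exact Finset.sum_neg_distrib _

lemma sigmaAtLeast_neg : sigmaAtLeast (-A) α = -sigmaAtLeast A α := by
  ext s
  refine ⟨fun hs => mem_neg'.2 ?_, fun hs => neg_neg s ▸ neg_mem_sigmaAtLeast_neg (mem_neg'.1 hs)⟩
  simpa using neg_mem_sigmaAtLeast_neg hs

lemma sum_add_ite_neg_mem_sigmaAtLeast_insert (hS : S ⊆ A) (hα : α ≤ #S) (ha : a ∉ A) (hx : x ∈ A) :
    S.sum id + a + (if x ∈ S then -x else x) ∈ sigmaAtLeast (insert a A) α := by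
  split_ifs with hxS
  · have haS : a ∉ S.erase x := fun h => ha (hS (mem_of_mem_erase h))
    convert sum_mem_sigmaAtLeast (B := insert a (S.erase x)) (insert_subset_insert a
      ((erase_subset x S).trans hS)) ?_ using 1
    · rw [sum_insert haS, ← sum_erase_add S id hxS]
      simp only [id]
      ring
    · rw [card_insert_of_notMem haS, card_erase_add_one hxS]
      exact hα
  · have haS : a ∉ insert x S := by
      rw [mem_insert]; rintro (rfl | h)
      exacts [ha hx, ha (hS h)]
    convert sum_mem_sigmaAtLeast (B := insert a (insert x S)) (insert_subset_insert a
      (insert_subset hx hS)) ?_ using 1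
    · rw [sum_insert haS, sum_insert hxS, id, id]
      ring
    · exact hα.trans ((card_le_card (subset_insert x S)).trans (card_le_card (subset_insert _ _)))

lemma card_sigmaAtLeast_add_card_lt_insert (hA : Disjoint A (-A)) (ha₀ : 0 < a)
    (ha : ∀ x ∈ A, |x| < a) (hα : α ≤ #A) :
    #(sigmaAtLeast A α) + #A < #(sigmaAtLeast (insert a A) α) := by
  have haA : a ∉ A := fun h => (ha a h).not_ge (le_abs_self a)
  have hne := sigmaAtLeast_nonempty hα
  obtain ⟨S, hSA, hSα, hSM⟩ := mem_sigmaAtLeast.1 ((sigmaAtLeast A α).max'_mem hne)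
  set M := (sigmaAtLeast A α).max' hne
  -- `M + a + f x` is the sum of `insert a (symmDiff S {x})`.
  set f : ℤ → ℤ := fun x => if x ∈ S then -x else x
  have hf_abs : ∀ x, |f x| = |x| := fun x => by simp only [f]; split_ifs <;> simp
  have h0 : (0 : ℤ) ∉ A.image f := by
    simp only [mem_image, not_exists, not_and]
    intro x hx hfx
    obtain rfl : x = 0 := abs_eq_zero.1 (by rw [← hf_abs, hfx, abs_zero])
    exact neg_notMem_of_disjoint_neg hA hx (by rwa [neg_zero])
  set D := insert 0 (A.image f)
  have hD_card : #D = #A + 1 := by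
    rw [card_insert_of_notMem h0, card_image_of_injOn (injOn_ite_neg hA)]
  have hD_abs : ∀ t ∈ D, |t| < a := by
    simp only [D, mem_insert, mem_image]
    rintro t (rfl | ⟨x, hx, rfl⟩)
    · simpa using ha₀
    · exact hf_abs x ▸ ha x hx
  have hD_mem : ∀ t ∈ D, M + a + t ∈ sigmaAtLeast (insert a A) α := by
    simp only [D, mem_insert, mem_image]
    rintro t (rfl | ⟨x, hx, rfl⟩)
    · convert sum_mem_sigmaAtLeast (insert_subset_insert a hSA)
        (hSα.trans (card_le_card (subset_insert a S))) using 1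
      rw [sum_insert (fun h => haA (hSA h)), hSM, id]
      ring
    · exact hSM ▸ sum_add_ite_neg_mem_sigmaAtLeast_insert hSA hSα haA hx
  set N := D.image (M + a + ·)
  have hN : Disjoint (sigmaAtLeast A α) N := by
    simp only [N, disjoint_left, mem_image, not_exists, not_and]
    intro s hs t ht hst
    have := le_max' _ s hs
    linarith [(abs_lt.1 (hD_abs t ht)).1]
  calc #(sigmaAtLeast A α) + #A < #(sigmaAtLeast A α) + #N := by
        rw [card_image_of_injective _ (add_right_injective _), hD_card]; omega
    _ = #(sigmaAtLeast A α ∪ N) := (card_union_of_disjoint hN).symm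
    _ ≤ #(sigmaAtLeast (insert a A) α) := by
        refine card_le_card (union_subset (sigmaAtLeast_mono (subset_insert a A)) ?_)
        simpa only [N, image_subset_iff] using hD_mem

lemma card_sigmaAtLeast_add_card_lt_insert_of_abs_le (hA : Disjoint (insert a A) (-insert a A))
    (haA : a ∉ A) (ha : ∀ x ∈ A, |x| ≤ |a|) (hα : α ≤ #A) :
    #(sigmaAtLeast A α) + #A < #(sigmaAtLeast (insert a A) α) := by
  have hA' : Disjoint A (-A) := hA.mono (subset_insert a A) (neg_subset_neg (subset_insert a A))
  have hlt : ∀ x ∈ A, |x| < |a| := by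
    intro x hx
    refine (ha x hx).lt_of_ne fun habs => ?_
    rcases abs_eq_abs.1 habs with rfl | rfl
    · exact haA hx
    · exact neg_notMem_of_disjoint_neg hA (mem_insert_of_mem hx) (by simp)
  have ha₀ : a ≠ 0 := by
    rintro rfl
    exact neg_notMem_of_disjoint_neg hA (mem_insert_self 0 A) (by simp)
  rcases ha₀.lt_or_gt with hneg | hpos
  · have key := card_sigmaAtLeast_add_card_lt_insert (A := -A) (α := α) (a := -a)
      (by rwa [neg_neg, disjoint_comm]) (neg_pos.2 hneg)
      (fun x hx => by simpa [abs_of_neg hneg] using hlt (-x) (mem_neg'.1 hx))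
      (by rwa [card_neg])
    rwa [← neg_insert, sigmaAtLeast_neg, sigmaAtLeast_neg, card_neg, card_neg, card_neg] at key
  · exact card_sigmaAtLeast_add_card_lt_insert hA' hpos
      (fun x hx => abs_of_pos hpos ▸ hlt x hx) hα

lemma card_mul_succ_add_two_le_two_mul_card_sigmaAtLeast (hA : Disjoint A (-A)) (hα : α ≤ #A) :
    #A * (#A + 1) + 2 ≤ 2 * #(sigmaAtLeast A α) + α * (α + 1) := by
  induction A using Finset.strongInduction with
  | H A ih =>
  rcases hα.eq_or_lt with rfl | hlt
  · have := (sigmaAtLeast_nonempty hα).card_pos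
    omega
  obtain ⟨b, hb, hmax⟩ := exists_max_image A (|·|) (card_pos.1 (by omega))
  have hcard := card_erase_add_one hb
  have hstep := card_sigmaAtLeast_add_card_lt_insert_of_abs_le (A := A.erase b) (α := α)
    (by rwa [insert_erase hb]) (notMem_erase b A) (fun x hx => hmax x (mem_of_mem_erase hx))
    (by omega)
  rw [insert_erase hb] at hstep
  have hIH := ih (A.erase b) (erase_ssubset hb)
    (hA.mono (erase_subset b A) (neg_subset_neg (erase_subset b A))) (by omega)
  rw [← hcard]
  nlinarith

end SigmaAtLeast

theorem stmt_0 (k α : ℕ) (A : Finset ℤ) (hcard : A.card = k)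
    (hA : A ∩ A.image (fun x => -x) = ∅) (hα : α ≤ k) :
    ((sigmaAtLeast A α).card : ℤ) ≥
      (k : ℤ) * ((k : ℤ) + 1) / 2 - (α : ℤ) * ((α : ℤ) + 1) / 2 + 1 := by
  subst hcard
  have h : #A * (#A + 1) + 2 ≤ 2 * #(sigmaAtLeast A α) + α * (α + 1) :=
    card_mul_succ_add_two_le_two_mul_card_sigmaAtLeast (disjoint_iff_inter_eq_empty.2 hA) hα
  obtain ⟨u, hu⟩ := Int.even_mul_succ_self (#A : ℤ)
  obtain ⟨v, hv⟩ := Int.even_mul_succ_self (α : ℤ)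
  zify at h
  rw [hu, hv] at h ⊢
  omega
end

section
/- For every k ≥ 1 and every integer α with 0 ≤ α ≤ k, the set A = {1, 2, …, k} satisfies A ∩ (−A) = ∅ and |Σ_α(A)| = k(k+1)/2 − α(α+1)/2 + 1; hence the lower bound |Σ_α(A)| ≥ k(k+1)/2 − α(α+1)/2 + 1 is optimal for sets with A ∩ (−A) = ∅. -/
/-!
Writing `T n = 1 + ⋯ + n = (n + 1).choose 2`, the subset sums of `{1, …, k}` over subsets of
size at least `α` are exactly the integers of `[T α, T k]`. A set of `j` positive integers sums
to at least `T j`, which gives the lower end; every value in the interval is reached by induction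
on `k`, using the new element `k + 1` exactly when the target exceeds `T k`.
-/

open Finset

lemma Nat.succ_succ_choose_two (n : ℕ) : (n + 2).choose 2 = (n + 1).choose 2 + (n + 1) := by
  rw [Nat.choose_succ_succ', Nat.choose_one_right, add_comm]

lemma Nat.le_succ_choose_two (n : ℕ) : n ≤ (n + 1).choose 2 := by
  rw [Nat.choose_succ_succ', Nat.choose_one_right]
  exact Nat.le_add_right n _

lemma Nat.succ_choose_two_add_le {j k : ℕ} (h : j < k) :
    (j + 1).choose 2 + k ≤ (k + 1).choose 2 := by
  obtain ⟨m, rfl⟩ : ∃ m, k = m + 1 := ⟨k - 1, by omega⟩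
  rw [Nat.succ_succ_choose_two]
  have := Nat.choose_le_choose 2 (show j + 1 ≤ m + 1 by omega)
  omega

lemma Int.natCast_succ_choose_two (n : ℕ) : ((n + 1).choose 2 : ℤ) = n * (n + 1) / 2 := by
  rw [Nat.choose_two_right, Nat.add_sub_cancel, Int.natCast_div, mul_comm]
  push_cast; rfl

lemma succ_card_choose_two_le_sum_of_pos {B : Finset ℤ} (hB : ∀ x ∈ B, 0 < x) :
    ((#B + 1).choose 2 : ℤ) ≤ ∑ x ∈ B, x := by
  induction B using Finset.induction_on_max with
  | empty => simp
  | insert a s hlt ih =>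
    have ha : a ∉ s := fun h => (hlt a h).false
    have hcard : (#s : ℤ) + 1 ≤ a := by
      have : #s ≤ #(Ioo 0 a) := card_le_card fun x hx =>
        mem_Ioo.2 ⟨hB x (mem_insert_of_mem hx), hlt x hx⟩
      rw [Int.card_Ioo] at this
      have := hB a (mem_insert_self a s)
      omega
    have := ih fun x hx => hB x (mem_insert_of_mem hx)
    rw [card_insert_of_notMem ha, sum_insert ha, Nat.succ_succ_choose_two]
    push_cast
    linarith

lemma sum_Icc_one_eq_choose_two (k : ℕ) : ∑ x ∈ Icc (1 : ℤ) k, x = ((k + 1).choose 2 : ℕ) := by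
  induction k with
  | zero => simp
  | succ k ih =>
    rw [Nat.succ_succ_choose_two, Nat.cast_succ, ← insert_Icc_right_eq_Icc_add_one (by omega),
      sum_insert (by simp), ih]
    push_cast
    ring

lemma exists_subset_Icc_one_card_le_sum_eq {k α : ℕ} (hα : α ≤ k) {n : ℤ}
    (hn : n ∈ Icc ((α + 1).choose 2 : ℤ) ((k + 1).choose 2)) :
    ∃ B ⊆ Icc (1 : ℤ) k, α ≤ #B ∧ ∑ x ∈ B, x = n := by
  induction k generalizing α n with
  | zero =>
    obtain rfl : α = 0 := by omega
    exact ⟨∅, empty_subset _, le_rfl, by simp at hn ⊢; omega⟩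
  | succ k ih =>
    have hstep : ((k + 1 + 1).choose 2 : ℤ) = (k + 1).choose 2 + (k + 1) := by
      exact_mod_cast Nat.succ_succ_choose_two k
    rw [mem_Icc, hstep] at hn
    by_cases hsmall : n ≤ (k + 1).choose 2
    · have hαk : α ≤ k := by
        by_contra
        obtain rfl : α = k + 1 := by omega
        omega
      obtain ⟨B, hB, hαB, rfl⟩ := ih hαk (mem_Icc.2 ⟨hn.1, hsmall⟩)
      exact ⟨B, hB.trans (Icc_subset_Icc_right (by omega)), hαB, rfl⟩
    have hlow : ((α - 1 + 1).choose 2 : ℤ) ≤ n - (k + 1) := by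
      rcases α with _ | j
      · have := Nat.le_succ_choose_two k
        simp only [zero_tsub, zero_add, Nat.choose_succ_self, Nat.cast_zero]
        omega
      rw [add_tsub_cancel_right]
      rcases (show j ≤ k by omega).eq_or_lt with rfl | hjk
      · omega
      · have := Nat.succ_choose_two_add_le hjk
        omega
    obtain ⟨B, hB, hαB, hsum⟩ := ih (by omega : α - 1 ≤ k) (mem_Icc.2 ⟨hlow, by omega⟩)
    have hk : (k + 1 : ℤ) ∉ B := fun h => by simpa using (mem_Icc.1 (hB h)).2
    refine ⟨insert (k + 1 : ℤ) B, insert_subset ?_ (hB.trans ?_), ?_, ?_⟩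
    · simp
    · exact Icc_subset_Icc_right (by omega)
    · rw [card_insert_of_notMem hk]; omega
    · rw [sum_insert hk, hsum]; ring

lemma sigmaAtLeast_Icc_one {k α : ℕ} (hα : α ≤ k) :
    sigmaAtLeast (Icc 1 k) α = Icc ((α + 1).choose 2 : ℤ) ((k + 1).choose 2) := by
  ext n
  simp only [sigmaAtLeast, mem_image, mem_filter, mem_powerset]
  constructor
  · rintro ⟨B, ⟨hB, hαB⟩, rfl⟩
    have hpos : ∀ x ∈ B, 0 < x := fun x hx => (mem_Icc.1 (hB hx)).1
    refine mem_Icc.2 ⟨?_, ?_⟩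
    · calc ((α + 1).choose 2 : ℤ) ≤ (#B + 1).choose 2 := by
            exact_mod_cast Nat.choose_le_choose 2 (by omega)
        _ ≤ ∑ x ∈ B, x := succ_card_choose_two_le_sum_of_pos hpos
    · calc ∑ x ∈ B, x ≤ ∑ x ∈ Icc (1 : ℤ) k, x :=
            sum_le_sum_of_subset_of_nonneg hB fun x hx _ => zero_le_one.trans (mem_Icc.1 hx).1
        _ = _ := sum_Icc_one_eq_choose_two k
  · intro hn
    obtain ⟨B, hB, hαB, hsum⟩ := exists_subset_Icc_one_card_le_sum_eq hα hn
    exact ⟨B, ⟨hB, hαB⟩, hsum⟩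

theorem stmt_1_general (k α : ℕ) (hα : α ≤ k) :
    (Finset.Icc (1 : ℤ) (k : ℤ) ∩
        (Finset.Icc (1 : ℤ) (k : ℤ)).image (fun x => -x) = ∅) ∧
    ((sigmaAtLeast (Finset.Icc (1 : ℤ) (k : ℤ)) α).card : ℤ) =
      (k : ℤ) * ((k : ℤ) + 1) / 2 - (α : ℤ) * ((α : ℤ) + 1) / 2 + 1 := by
  refine ⟨?_, ?_⟩
  · ext x
    simp only [mem_inter, mem_image, mem_Icc, notMem_empty, iff_false]
    rintro ⟨⟨hx, -⟩, y, ⟨hy, -⟩, rfl⟩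
    omega
  · have := Nat.choose_le_choose 2 (Nat.add_le_add_right hα 1)
    rw [sigmaAtLeast_Icc_one hα, Int.card_Icc, ← Int.natCast_succ_choose_two,
      ← Int.natCast_succ_choose_two]
    omega

theorem stmt_1 (k α : ℕ) (hk : 1 ≤ k) (hα : α ≤ k) :
    (Finset.Icc (1 : ℤ) (k : ℤ) ∩
        (Finset.Icc (1 : ℤ) (k : ℤ)).image (fun x => -x) = ∅) ∧
    ((sigmaAtLeast (Finset.Icc (1 : ℤ) (k : ℤ)) α).card : ℤ) =
      (k : ℤ) * ((k : ℤ) + 1) / 2 - (α : ℤ) * ((α : ℤ) + 1) / 2 + 1 :=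
  stmt_1_general k α hα
end

section
/- Let n and p be positive integers and let A be a finite set of integers consisting of exactly n negative integers and exactly p positive integers (and not containing 0). If α is an integer with 0 ≤ α ≤ n + p, α ≤ n, and α ≤ p, then |Σ_α(A)| ≥ n(n+1)/2 + p(p+1)/2 + 1. -/
/-!
Split `A` into its negative part `N` and its positive part `P`. The subset sums of `P` are
nonnegative and, for `|P| = p`, there are at least `p(p+1)/2 + 1` of them: adding a new maximum
`a` to `P` creates the `|P| + 1` sums `a + ΣP - x` (`x ∈ P ∪ {0}`), all above the old maximum
`ΣP`. Symmetrically for `N`; the two sets of sums meet only in `0`, so together they have at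
least `n(n+1)/2 + p(p+1)/2 + 1` elements. Reflecting by `x ↦ ΣA - x` turns a subset sum of `N`
(resp. `P`) into the sum of a subset of `A` containing all of `P` (resp. `N`), hence of size at
least `p ≥ α` (resp. `n ≥ α`).
-/

open Finset

section SubsetSums

variable {M : Type*} [AddCommMonoid M] [DecidableEq M]

def subsetSums (s : Finset M) : Finset M :=
  s.powerset.image (·.sum id)

theorem sum_mem_subsetSums {s t : Finset M} (h : t ⊆ s) : t.sum id ∈ subsetSums s :=
  mem_image.2 ⟨t, mem_powerset.2 h, rfl⟩

theorem subsetSums_mono {s t : Finset M} (h : s ⊆ t) : subsetSums s ⊆ subsetSums t :=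
  image_subset_image (powerset_mono.2 h)

theorem subsetSums_image_neg {G : Type*} [AddCommGroup G] [DecidableEq G] (s : Finset G) :
    subsetSums (s.image Neg.neg) = (subsetSums s).image Neg.neg := by
  rw [subsetSums, subsetSums, powerset_image, image_image, image_image]
  refine image_congr fun t _ => ?_
  simp only [Function.comp_apply, sum_image neg_injective.injOn]
  exact sum_neg_distrib (f := id)

section Ordered

variable [PartialOrder M] [IsOrderedAddMonoid M]

theorem nonneg_of_mem_subsetSums {s : Finset M} (hs : ∀ x ∈ s, 0 ≤ x) {y : M}
    (hy : y ∈ subsetSums s) : 0 ≤ y := by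
  obtain ⟨t, ht, rfl⟩ := mem_image.1 hy
  exact sum_nonneg fun x hx => hs x (mem_powerset.1 ht hx)

theorem nonpos_of_mem_subsetSums {s : Finset M} (hs : ∀ x ∈ s, x ≤ 0) {y : M}
    (hy : y ∈ subsetSums s) : y ≤ 0 := by
  obtain ⟨t, ht, rfl⟩ := mem_image.1 hy
  exact sum_nonpos fun x hx => hs x (mem_powerset.1 ht hx)

theorem le_sum_of_mem_subsetSums {s : Finset M} (hs : ∀ x ∈ s, 0 ≤ x) {y : M}
    (hy : y ∈ subsetSums s) : y ≤ s.sum id := by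
  obtain ⟨t, ht, rfl⟩ := mem_image.1 hy
  exact sum_le_sum_of_subset_of_nonneg (mem_powerset.1 ht) fun x hx _ => hs x hx

end Ordered

variable {G : Type*} [AddCommGroup G] [LinearOrder G] [IsOrderedAddMonoid G]

theorem card_subsetSums_insert_of_lt {s : Finset G} {a : G} (hs : ∀ x ∈ s, 0 < x)
    (ha : ∀ x ∈ s, x < a) (ha0 : 0 < a) :
    #(subsetSums s) + #s + 1 ≤ #(subsetSums (insert a s)) := by
  have has : a ∉ s := fun h => (ha a h).false
  set top : Finset G := (insert 0 s).image (fun x => a + (s.sum id - x))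
  have htop_card : #top = #s + 1 := by
    rw [card_image_of_injective _ fun x y h => by simpa using h,
      card_insert_of_notMem fun h0 => (hs 0 h0).false]
  have htop_sub : top ⊆ subsetSums (insert a s) := by
    intro z hz
    obtain ⟨x, hx, rfl⟩ := mem_image.1 hz
    rcases mem_insert.1 hx with rfl | hx
    · simpa [sum_insert has] using sum_mem_subsetSums (subset_refl (insert a s))
    · have := sum_mem_subsetSums (insert_subset_insert a (erase_subset x s))
      rwa [sum_insert fun h => has (mem_of_mem_erase h), sum_erase_eq_sub hx] at this
  have hdisj : Disjoint (subsetSums s) top := by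
    rw [disjoint_left]
    intro y hy hy'
    obtain ⟨x, hx, rfl⟩ := mem_image.1 hy'
    have hxa : x < a := by
      rcases mem_insert.1 hx with rfl | hx
      exacts [ha0, ha x hx]
    refine (le_sum_of_mem_subsetSums (fun x hx => (hs x hx).le) hy).not_gt ?_
    rw [add_sub_left_comm]
    exact lt_add_of_pos_right _ (sub_pos.2 hxa)
  calc #(subsetSums s) + #s + 1 = #(subsetSums s ∪ top) := by
        rw [card_union_of_disjoint hdisj, htop_card, add_assoc]
    _ ≤ #(subsetSums (insert a s)) :=
        card_le_card (union_subset (subsetSums_mono (subset_insert a s)) htop_sub)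

theorem card_subsetSums_of_pos {s : Finset G} (hs : ∀ x ∈ s, 0 < x) :
    #s * (#s + 1) + 2 ≤ 2 * #(subsetSums s) := by
  induction s using Finset.induction_on_max with
  | empty => simp [subsetSums]
  | insert a s ha ih =>
    have hs' : ∀ x ∈ s, 0 < x := fun x hx => hs x (mem_insert_of_mem hx)
    have := card_subsetSums_insert_of_lt hs' ha (hs a (mem_insert_self a s))
    rw [card_insert_of_notMem fun h => (ha a h).false]
    linarith [ih hs']

theorem card_subsetSums_of_neg {s : Finset G} (hs : ∀ x ∈ s, x < 0) :
    #s * (#s + 1) + 2 ≤ 2 * #(subsetSums s) := by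
  have := card_subsetSums_of_pos (s := s.image Neg.neg) (by simpa using hs)
  rwa [subsetSums_image_neg, card_image_of_injective _ neg_injective,
    card_image_of_injective _ neg_injective] at this

end SubsetSums

theorem sum_sub_sum_mem_sigmaAtLeast {A B : Finset ℤ} {α : ℕ} (hB : B ⊆ A)
    (hα : α ≤ #(A \ B)) : A.sum id - B.sum id ∈ sigmaAtLeast A α :=
  mem_image.2 ⟨A \ B, mem_filter.2 ⟨mem_powerset.2 sdiff_subset, hα⟩,
    eq_sub_of_add_eq (sum_sdiff hB)⟩

theorem image_sub_subsetSums_subset_sigmaAtLeast {A s t : Finset ℤ} {α : ℕ} (hs : s ⊆ A)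
    (ht : t ⊆ A) (hst : Disjoint s t) (hα : α ≤ #t) :
    (subsetSums s).image (A.sum id - ·) ⊆ sigmaAtLeast A α := by
  intro z hz
  obtain ⟨y, hy, rfl⟩ := mem_image.1 hz
  obtain ⟨B, hB, rfl⟩ := mem_image.1 hy
  have hBs : B ⊆ s := mem_powerset.1 hB
  have htB : t ⊆ A \ B := subset_sdiff.2 ⟨ht, (hst.mono_left hBs).symm⟩
  exact sum_sub_sum_mem_sigmaAtLeast (hBs.trans hs) (hα.trans (card_le_card htB))

theorem stmt_3_general (n p α : ℕ) (A : Finset ℤ)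
    (hneg : (A.filter (fun x => x < 0)).card = n)
    (hpos : (A.filter (fun x => 0 < x)).card = p)
    (hαn : α ≤ n) (hαp : α ≤ p) :
    ((sigmaAtLeast A α).card : ℤ) ≥
      (n : ℤ) * ((n : ℤ) + 1) / 2 + (p : ℤ) * ((p : ℤ) + 1) / 2 + 1 := by
  set N := A.filter (fun x => x < 0)
  set P := A.filter (fun x => 0 < x)
  have hN : ∀ x ∈ N, x < 0 := fun x hx => (mem_filter.1 hx).2
  have hP : ∀ x ∈ P, 0 < x := fun x hx => (mem_filter.1 hx).2
  have hNP : Disjoint N P := disjoint_filter.2 fun _ _ h h' => lt_asymm h h'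
  have hcardN : (n : ℤ) * (n + 1) + 2 ≤ 2 * #(subsetSums N) := by
    exact_mod_cast hneg ▸ card_subsetSums_of_neg hN
  have hcardP : (p : ℤ) * (p + 1) + 2 ≤ 2 * #(subsetSums P) := by
    exact_mod_cast hpos ▸ card_subsetSums_of_pos hP
  have hinter : #(subsetSums N ∩ subsetSums P) ≤ 1 := by
    refine card_le_one.2 fun y hy z hz => ?_
    have hzero : ∀ w ∈ subsetSums N ∩ subsetSums P, w = 0 := fun w hw =>
      le_antisymm (nonpos_of_mem_subsetSums (fun x hx => (hN x hx).le) (mem_inter.1 hw).1)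
        (nonneg_of_mem_subsetSums (fun x hx => (hP x hx).le) (mem_inter.1 hw).2)
    rw [hzero y hy, hzero z hz]
  have hunion : #(subsetSums N ∪ subsetSums P) ≤ #(sigmaAtLeast A α) := by
    rw [← card_image_of_injective _ (sub_right_injective (b := A.sum id)), image_union]
    exact card_le_card (union_subset
      (image_sub_subsetSums_subset_sigmaAtLeast (filter_subset _ _) (filter_subset _ _) hNP
        (hpos ▸ hαp))
      (image_sub_subsetSums_subset_sigmaAtLeast (filter_subset _ _) (filter_subset _ _)
        hNP.symm (hneg ▸ hαn)))
  have := card_union_add_card_inter (subsetSums N) (subsetSums P)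
  omega

theorem stmt_3 (n p α : ℕ) (hn : 1 ≤ n) (hp : 1 ≤ p) (A : Finset ℤ)
    (hneg : (A.filter (fun x => x < 0)).card = n)
    (hpos : (A.filter (fun x => 0 < x)).card = p)
    (h0 : (0 : ℤ) ∉ A)
    (hα : α ≤ n + p) (hαn : α ≤ n) (hαp : α ≤ p) :
    ((sigmaAtLeast A α).card : ℤ) ≥
      (n : ℤ) * ((n : ℤ) + 1) / 2 + (p : ℤ) * ((p : ℤ) + 1) / 2 + 1 :=
  stmt_3_general n p α A hneg hpos hαn hαp
end

section
/- Let n and p be positive integers and let A be a finite set of integers consisting of exactly n negative integers and exactly p positive integers (and not containing 0). If α is an integer with 0 ≤ α ≤ n + p, α > n, and α > p, then |Σ_α(A)| ≥ n(n+1)/2 + p(p+1)/2 − (α−n)(α−n+1)/2 − (α−p)(α−p+1)/2 + 1. -/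
open Finset

section SumsOfCard

variable {M : Type*} [AddCommMonoid M] [LinearOrder M]

def sumsOfCard (k : ℕ) (X : Finset M) : Finset M :=
  (X.powersetCard k).image (fun B => B.sum id)

theorem sumsOfCard_nonempty {k : ℕ} {X : Finset M} (hk : k ≤ #X) :
    (sumsOfCard k X).Nonempty :=
  (powersetCard_nonempty.mpr hk).image _

theorem sumsOfCard_mono {k : ℕ} {X Y : Finset M} (h : X ⊆ Y) :
    sumsOfCard k X ⊆ sumsOfCard k Y :=
  image_subset_image (powersetCard_mono h)

variable [IsOrderedCancelAddMonoid M]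

theorem card_sumsOfCard_add_le_card_sumsOfCard_insert {k : ℕ} {X : Finset M} {b : M}
    (hb : ∀ x ∈ X, x < b) (hk : k ≤ #X) :
    #(sumsOfCard k X) + k ≤ #(sumsOfCard k (insert b X)) := by
  obtain ⟨B, hBX, hBmax⟩ :
      ∃ B ∈ X.powersetCard k, ∀ C ∈ X.powersetCard k, C.sum id ≤ B.sum id :=
    exists_max_image _ _ (powersetCard_nonempty.mpr hk)
  rw [mem_powersetCard] at hBX
  set swap : M → M := fun y => b + (B.erase y).sum id
  have hsplit : ∀ y ∈ B, y + (B.erase y).sum id = B.sum id := fun y hy => add_sum_erase B id hy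
  have hswap_mem : ∀ y ∈ B, swap y ∈ sumsOfCard k (insert b X) := by
    intro y hy
    have hbB : b ∉ B.erase y := fun h => (hb b (hBX.1 (mem_of_mem_erase h))).false
    refine mem_image.mpr ⟨insert b (B.erase y), mem_powersetCard.mpr ⟨?_, ?_⟩, ?_⟩
    · exact insert_subset_insert b ((erase_subset y B).trans hBX.1)
    · rw [card_insert_of_notMem hbB, card_erase_of_mem hy, hBX.2]
      have : 0 < #B := card_pos.mpr ⟨y, hy⟩
      omega
    · exact sum_insert hbB
  have hswap_gt : ∀ y ∈ B, B.sum id < swap y := by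
    intro y hy
    rw [← hsplit y hy]
    exact add_lt_add_left (hb y (hBX.1 hy)) _
  have hswap_inj : Set.InjOn swap B := by
    intro y hy y' hy' h
    have h' : (B.erase y).sum id = (B.erase y').sum id := add_left_cancel h
    exact add_right_cancel ((hsplit y hy).trans ((hsplit y' hy').symm.trans (by rw [h'])))
  have hdisj : Disjoint (sumsOfCard k X) (B.image swap) := by
    rw [disjoint_left]
    intro z hz hz'
    obtain ⟨C, hC, rfl⟩ := mem_image.mp hz
    obtain ⟨y, hy, hyz⟩ := mem_image.mp hz'
    exact not_lt_of_ge (hBmax C hC) (hyz ▸ hswap_gt y hy)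
  calc #(sumsOfCard k X) + k
      = #(sumsOfCard k X ∪ B.image swap) := by
        rw [card_union_of_disjoint hdisj, card_image_of_injOn hswap_inj, hBX.2]
    _ ≤ #(sumsOfCard k (insert b X)) := by
        refine card_le_card (union_subset (sumsOfCard_mono (subset_insert b X)) ?_)
        exact image_subset_iff.mpr hswap_mem

theorem le_card_sumsOfCard {k : ℕ} {X : Finset M} (hk : k ≤ #X) :
    k * (#X - k) + 1 ≤ #(sumsOfCard k X) := by
  induction X using Finset.induction_on_max generalizing k with
  | empty =>
    obtain rfl : k = 0 := by simpa using hk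
    simp [sumsOfCard]
  | insert b X hb ih =>
    have hbX : b ∉ X := fun h => (hb b h).false
    rw [card_insert_of_notMem hbX] at hk ⊢
    rcases hk.lt_or_eq with hk | rfl
    · have hkX := Nat.le_of_lt_succ hk
      have := card_sumsOfCard_add_le_card_sumsOfCard_insert hb hkX
      have := ih hkX
      rw [Nat.succ_sub hkX, Nat.mul_succ]
      omega
    · simpa using (sumsOfCard_nonempty (card_insert_of_notMem hbX).ge).card_pos

end SumsOfCard

theorem sumsOfCard_succ_insert_zero_subset_sigmaAtLeast (A : Finset ℤ) (α : ℕ) :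
    sumsOfCard (α + 1) (insert 0 A) ⊆ sigmaAtLeast A α := by
  intro z hz
  obtain ⟨C, hC, rfl⟩ := mem_image.mp hz
  rw [mem_powersetCard] at hC
  refine mem_image.mpr ⟨C.erase 0, mem_filter.mpr ⟨?_, ?_⟩, sum_erase C rfl⟩
  · exact mem_powerset.mpr fun x hx => (mem_insert.mp (hC.1 (mem_of_mem_erase hx))).resolve_left
      (ne_of_mem_erase hx)
  · have := pred_card_le_card_erase (a := (0 : ℤ)) (s := C)
    omega

theorem card_eq_card_filter_neg_add_card_filter_pos {A : Finset ℤ} (h0 : (0 : ℤ) ∉ A) :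
    #A = #(A.filter (fun x => x < 0)) + #(A.filter (fun x => 0 < x)) := by
  rw [← card_filter_add_card_filter_not (s := A) (fun x => x < 0)]
  congr 2
  refine filter_congr fun x hx => ?_
  have : x ≠ 0 := fun h => h0 (h ▸ hx)
  omega

theorem triangle_sum_identity (n p α : ℤ) :
    n * (n + 1) / 2 + p * (p + 1) / 2 - (α - n) * (α - n + 1) / 2 - (α - p) * (α - p + 1) / 2
      = (n + p - α) * (α + 1) := by
  have half : ∀ x : ℤ, x * (x + 1) / 2 * 2 = x * (x + 1) := fun x =>
    Int.ediv_mul_cancel (Int.even_mul_succ_self x).two_dvd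
  linarith [half n, half p, half (α - n), half (α - p)]

theorem stmt_6_general (n p α : ℕ) (A : Finset ℤ)
    (hneg : (A.filter (fun x => x < 0)).card = n)
    (hpos : (A.filter (fun x => 0 < x)).card = p)
    (h0 : (0 : ℤ) ∉ A)
    (hα : α ≤ n + p) :
    ((sigmaAtLeast A α).card : ℤ) ≥
      (n : ℤ) * ((n : ℤ) + 1) / 2 + (p : ℤ) * ((p : ℤ) + 1) / 2
        - ((α : ℤ) - (n : ℤ)) * ((α : ℤ) - (n : ℤ) + 1) / 2
        - ((α : ℤ) - (p : ℤ)) * ((α : ℤ) - (p : ℤ) + 1) / 2 + 1 := by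
  have hcard : #(insert 0 A) = n + p + 1 := by
    rw [card_insert_of_notMem h0, card_eq_card_filter_neg_add_card_filter_pos h0, hneg, hpos]
  have hbound := (le_card_sumsOfCard (k := α + 1) (X := insert 0 A) (by omega)).trans
    (card_le_card (sumsOfCard_succ_insert_zero_subset_sigmaAtLeast A α))
  rw [hcard, show n + p + 1 - (α + 1) = n + p - α by omega] at hbound
  zify [hα] at hbound
  rw [triangle_sum_identity]
  linarith

theorem stmt_6 (n p α : ℕ) (hn : 1 ≤ n) (hp : 1 ≤ p) (A : Finset ℤ)
    (hneg : (A.filter (fun x => x < 0)).card = n)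
    (hpos : (A.filter (fun x => 0 < x)).card = p)
    (h0 : (0 : ℤ) ∉ A)
    (hα : α ≤ n + p) (hαn : n < α) (hαp : p < α) :
    ((sigmaAtLeast A α).card : ℤ) ≥
      (n : ℤ) * ((n : ℤ) + 1) / 2 + (p : ℤ) * ((p : ℤ) + 1) / 2
        - ((α : ℤ) - (n : ℤ)) * ((α : ℤ) - (n : ℤ) + 1) / 2
        - ((α : ℤ) - (p : ℤ)) * ((α : ℤ) - (p : ℤ) + 1) / 2 + 1 :=
  stmt_6_general n p α A hneg hpos h0 hα
end

section
/- Let n and p be positive integers and let A be a finite set of integers consisting of exactly n negative integers, exactly p positive integers, and 0. If α is an integer with 0 ≤ α ≤ n + p + 1, α > n, and α ≤ p, then |Σ_α(A)| ≥ n(n+1)/2 + p(p+1)/2 − (α−n)(α−n−1)/2 + 1. -/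
open Finset

theorem card_add_card_le_of_inter_subset_singleton {α : Type*} [DecidableEq α] {s t : Finset α}
    {a : α} (h : s ∩ t ⊆ {a}) : s.card + t.card ≤ (s ∪ t).card + 1 := by
  rw [← card_union_add_card_inter]
  exact Nat.add_le_add_left ((card_le_card h).trans (card_singleton a).le) _

section SubsetSums

variable {M : Type*} [AddCommMonoid M] [LinearOrder M]

def subsetSumsAtMost (s : Finset M) (r : ℕ) : Finset M :=
  (s.powerset.filter (fun B => B.card ≤ r)).image (fun B => B.sum id)

theorem mem_subsetSumsAtMost {s : Finset M} {r : ℕ} {x : M} :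
    x ∈ subsetSumsAtMost s r ↔ ∃ B ⊆ s, B.card ≤ r ∧ B.sum id = x := by
  simp [subsetSumsAtMost, and_assoc]

theorem subsetSumsAtMost_mono {s t : Finset M} {r k : ℕ} (hst : s ⊆ t) (hrk : r ≤ k) :
    subsetSumsAtMost s r ⊆ subsetSumsAtMost t k := by
  intro x hx
  obtain ⟨B, hBs, hBr, rfl⟩ := mem_subsetSumsAtMost.1 hx
  exact mem_subsetSumsAtMost.2 ⟨B, hBs.trans hst, hBr.trans hrk, rfl⟩

theorem nonneg_of_mem_subsetSumsAtMost [IsOrderedAddMonoid M] {s : Finset M} {r : ℕ}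
    (hs : ∀ x ∈ s, 0 ≤ x) {y : M} (hy : y ∈ subsetSumsAtMost s r) : 0 ≤ y := by
  obtain ⟨B, hBs, -, rfl⟩ := mem_subsetSumsAtMost.1 hy
  exact sum_nonneg fun x hx => hs x (hBs hx)

theorem nonpos_of_mem_subsetSumsAtMost [IsOrderedAddMonoid M] {s : Finset M} {r : ℕ}
    (hs : ∀ x ∈ s, x ≤ 0) {y : M} (hy : y ∈ subsetSumsAtMost s r) : y ≤ 0 := by
  obtain ⟨B, hBs, -, rfl⟩ := mem_subsetSumsAtMost.1 hy
  exact sum_nonpos fun x hx => hs x (hBs hx)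

theorem card_add_card_subsetSumsAtMost_le [IsOrderedAddMonoid M] {s t u : Finset M} {r k l : ℕ}
    (hs : ∀ x ∈ s, x ≤ 0) (ht : ∀ x ∈ t, 0 ≤ x) (hsu : s ⊆ u) (htu : t ⊆ u) (hrl : r ≤ l)
    (hkl : k ≤ l) :
    (subsetSumsAtMost s r).card + (subsetSumsAtMost t k).card ≤
      (subsetSumsAtMost u l).card + 1 := by
  have hinter : subsetSumsAtMost s r ∩ subsetSumsAtMost t k ⊆ {0} := fun y hy => by
    rw [mem_inter] at hy
    exact mem_singleton.2 (le_antisymm (nonpos_of_mem_subsetSumsAtMost hs hy.1)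
      (nonneg_of_mem_subsetSumsAtMost ht hy.2))
  have hunion := union_subset (subsetSumsAtMost_mono hsu hrl) (subsetSumsAtMost_mono htu hkl)
  exact (card_add_card_le_of_inter_subset_singleton hinter).trans
    (Nat.add_le_add_right (card_le_card hunion) 1)

variable [IsOrderedCancelAddMonoid M]

theorem card_subsetSumsAtMost_add_le {s : Finset M} (hs : ∀ x ∈ s, 0 < x) (r : ℕ) :
    (subsetSumsAtMost s r).card + (s.card - r) ≤ (subsetSumsAtMost s (r + 1)).card := by
  obtain ⟨T, hT, hTmax⟩ :=
    exists_max_image (s.powerset.filter (fun B => B.card ≤ r)) (fun B => B.sum id) ⟨∅, by simp⟩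
  rw [mem_filter, mem_powerset] at hT
  have hle : ∀ y ∈ subsetSumsAtMost s r, y ≤ T.sum id := by
    intro y hy
    obtain ⟨B, hBs, hBr, rfl⟩ := mem_subsetSumsAtMost.1 hy
    exact hTmax B (by simp [hBs, hBr])
  set new := (s \ T).image (T.sum id + ·)
  have hdisj : Disjoint (subsetSumsAtMost s r) new := by
    refine disjoint_left.2 fun y hy hy' => ?_
    obtain ⟨x, hx, rfl⟩ := mem_image.1 hy'
    exact (hle _ hy).not_gt (lt_add_of_pos_right _ (hs x (mem_sdiff.1 hx).1))
  have hsub : subsetSumsAtMost s r ∪ new ⊆ subsetSumsAtMost s (r + 1) := by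
    refine union_subset (subsetSumsAtMost_mono subset_rfl r.le_succ) fun y hy => ?_
    obtain ⟨x, hx, rfl⟩ := mem_image.1 hy
    rw [mem_sdiff] at hx
    refine mem_subsetSumsAtMost.2 ⟨insert x T, insert_subset hx.1 hT.1, ?_, ?_⟩
    · rw [card_insert_of_notMem hx.2]; omega
    · rw [sum_insert hx.2, add_comm]; rfl
  calc (subsetSumsAtMost s r).card + (s.card - r)
      ≤ (subsetSumsAtMost s r).card + (s \ T).card := by
        rw [card_sdiff_of_subset hT.1]; omega
    _ = (subsetSumsAtMost s r ∪ new).card := by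
        rw [card_union_of_disjoint hdisj, card_image_of_injective _ (add_right_injective _)]
    _ ≤ _ := card_le_card hsub

theorem card_subsetSumsAtMost_ge {s : Finset M} (hs : ∀ x ∈ s, 0 < x) (r : ℕ) :
    1 + ∑ i ∈ range r, (s.card - i) ≤ (subsetSumsAtMost s r).card := by
  induction r with
  | zero => exact card_pos.2 ⟨0, mem_subsetSumsAtMost.2 ⟨∅, by simp⟩⟩
  | succ r ih =>
    rw [sum_range_succ]
    linarith [card_subsetSumsAtMost_add_le hs r]

end SubsetSums

theorem two_mul_sum_range_sub_add (p r : ℕ) (h : r ≤ p) :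
    2 * ∑ i ∈ range r, (p - i) + (p - r) * (p - r + 1) = p * (p + 1) := by
  induction r with
  | zero => simp
  | succ r ih =>
    obtain ⟨q, rfl⟩ := Nat.exists_eq_add_of_lt h
    rw [sum_range_succ, ← ih (by omega)]
    rw [show r + q + 1 - r = q + 1 by omega, show r + q + 1 - (r + 1) = q by omega]
    ring

theorem card_filter_lt_add_card_filter_gt {α : Type*} [LinearOrder α] {A : Finset α} {a : α}
    (ha : a ∈ A) : (A.filter (· < a)).card + (A.filter (a < ·)).card + 1 = A.card := by
  rw [← card_union_of_disjoint, ← filter_or, ← card_erase_add_one ha, ← filter_ne']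
  · simp_rw [ne_iff_lt_or_gt]
  · exact disjoint_filter.2 fun x _ h h' => h.not_gt h'

theorem sigmaAtLeast_eq_image {A : Finset ℤ} {α : ℕ} (h : α ≤ A.card) :
    sigmaAtLeast A α = (subsetSumsAtMost A (A.card - α)).image (A.sum id - ·) := by
  ext y
  simp only [sigmaAtLeast, mem_image, mem_filter, mem_powerset, mem_subsetSumsAtMost]
  constructor
  · rintro ⟨B, ⟨hBA, hB⟩, rfl⟩
    refine ⟨_, ⟨A \ B, sdiff_subset, ?_, rfl⟩, ?_⟩
    · rw [card_sdiff_of_subset hBA]; omega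
    · rw [← sum_sdiff hBA]; abel
  · rintro ⟨_, ⟨X, hXA, hX, rfl⟩, rfl⟩
    refine ⟨A \ X, ⟨sdiff_subset, ?_⟩, ?_⟩
    · rw [card_sdiff_of_subset hXA]; have := card_le_card hXA; omega
    · rw [← sum_sdiff hXA]; abel

theorem card_sigmaAtLeast {A : Finset ℤ} {α : ℕ} (h : α ≤ A.card) :
    (sigmaAtLeast A α).card = (subsetSumsAtMost A (A.card - α)).card := by
  rw [sigmaAtLeast_eq_image h, card_image_of_injective _ sub_right_injective]

theorem stmt_9_general (n p α : ℕ) (A : Finset ℤ)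
    (hneg : (A.filter (fun x => x < 0)).card = n)
    (hpos : (A.filter (fun x => 0 < x)).card = p)
    (h0 : (0 : ℤ) ∈ A)
    (hαn : n < α) (hαp : α ≤ p) :
    ((sigmaAtLeast A α).card : ℤ) ≥
      (n : ℤ) * ((n : ℤ) + 1) / 2 + (p : ℤ) * ((p : ℤ) + 1) / 2
        - ((α : ℤ) - (n : ℤ)) * ((α : ℤ) - (n : ℤ) - 1) / 2 + 1 := by
  set N := A.filter (fun x => x < 0)
  set P := A.filter (fun x => 0 < x)
  have hN : ∀ x ∈ N, x < 0 := fun x hx => (mem_filter.1 hx).2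
  have hP : ∀ x ∈ P, 0 < x := fun x hx => (mem_filter.1 hx).2
  have hA : A.card = n + p + 1 := by rw [← card_filter_lt_add_card_filter_gt h0, hneg, hpos]
  set r := p + n + 1 - α
  have hcard := card_add_card_subsetSumsAtMost_le (fun x hx => (hN x hx).le)
    (fun x hx => (hP x hx).le) (filter_subset _ A) (filter_subset _ A)
    (show n ≤ A.card - α by omega) (show r ≤ A.card - α by omega)
  rw [← card_sigmaAtLeast (by omega)] at hcard
  -- Negative elements are positive in the order dual.
  have hNcard : 1 + ∑ i ∈ range n, (n - i) ≤ (subsetSumsAtMost N n).card :=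
    hneg ▸ card_subsetSumsAtMost_ge (M := ℤᵒᵈ) hN n
  have hPcard : 1 + ∑ i ∈ range r, (p - i) ≤ (subsetSumsAtMost P r).card :=
    hpos ▸ card_subsetSumsAtMost_ge hP r
  have hn := two_mul_sum_range_sub_add n n le_rfl
  have hp := two_mul_sum_range_sub_add p r (by omega)
  have hαr : ((α : ℤ) - n) * ((α : ℤ) - n - 1) = ((p - r : ℕ) : ℤ) * ((p - r : ℕ) + 1) := by
    rw [show p - r = α - n - 1 by omega]; push_cast [Nat.sub_sub, show n + 1 ≤ α by omega]; ring
  rw [hαr]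
  generalize ∑ i ∈ range n, (n - i) = Sn at hn hNcard
  generalize ∑ i ∈ range r, (p - i) = Sp at hp hPcard
  rw [Nat.sub_self, zero_mul, add_zero] at hn
  zify at hn hp hcard
  omega

theorem stmt_9 (n p α : ℕ) (hn : 1 ≤ n) (hp : 1 ≤ p) (A : Finset ℤ)
    (hneg : (A.filter (fun x => x < 0)).card = n)
    (hpos : (A.filter (fun x => 0 < x)).card = p)
    (h0 : (0 : ℤ) ∈ A)
    (hα : α ≤ n + p + 1) (hαn : n < α) (hαp : α ≤ p) :
    ((sigmaAtLeast A α).card : ℤ) ≥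
      (n : ℤ) * ((n : ℤ) + 1) / 2 + (p : ℤ) * ((p : ℤ) + 1) / 2
        - ((α : ℤ) - (n : ℤ)) * ((α : ℤ) - (n : ℤ) - 1) / 2 + 1 :=
  stmt_9_general n p α A hneg hpos h0 hαn hαp
end

section
/- Let k ≥ 2, r ≥ 1, and α be integers with 0 ≤ α ≤ rk − 1, and let m ∈ [1, k] be the integer with (m−1)r ≤ α < mr. Let A be a set of k distinct integers with A ∩ (−A) = ∅, and let 𝒜 be the multiset consisting of each element of A with multiplicity exactly r. Then |Σ_α(𝒜)| ≥ r(k(k+1)/2 − m(m+1)/2) + m(mr − α) + 1. -/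
/-! For `r = 1`, let `a ∈ A` have largest absolute value. Starting from a subset of `A \ {a}`
whose sum is extremal in the direction of `a`, adding `a` and then toggling single elements
produces `|A|` new subset sums beyond all of `Σ_α(A \ {a})`; induction on `|A|` gives
`|Σ_α(A)| ≥ k(k+1)/2 - (α+1)(α+2)/2 + α + 2`. For general `r`, write `α = jr + s` with
`0 ≤ s ≤ r`: `Σ_α` of `r + 1` copies contains `Σ` of `r` copies plus `Σ` of one copy, the latter
with `j` or `j + 1` terms, and the Cauchy–Davenport inequality `|X + Y| ≥ |X| + |Y| - 1` in `ℤ`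
carries the bound from `r` to `r + 1`. -/

/-- `sigmaSeqAtLeast A r α` is the set of all subsequence sums of the multiset
consisting of each element of `A` with multiplicity `r`, coming from
submultisets with at least `α` terms. -/
def sigmaSeqAtLeast (A : Finset ℤ) (r α : ℕ) : Finset ℤ :=
  (((r • A.val).powerset.filter (fun B => α ≤ Multiset.card B)).map
    Multiset.sum).toFinset

open Finset Pointwise

variable {A A' : Finset ℤ} {r α : ℕ}

theorem mem_sigmaSeqAtLeast {x : ℤ} :
    x ∈ sigmaSeqAtLeast A r α ↔ ∃ B ≤ r • A.val, α ≤ Multiset.card B ∧ B.sum = x := by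
  simp [sigmaSeqAtLeast, and_assoc]

theorem mem_sigmaSeqAtLeast_one {x : ℤ} :
    x ∈ sigmaSeqAtLeast A 1 α ↔ ∃ B ⊆ A, α ≤ #B ∧ ∑ b ∈ B, b = x := by
  rw [mem_sigmaSeqAtLeast, one_nsmul]
  constructor
  · rintro ⟨B, hBA, hcard, rfl⟩
    exact ⟨⟨B, Multiset.nodup_of_le hBA A.nodup⟩, val_le_iff.1 hBA, hcard,
      by rw [sum_eq_multiset_sum, Multiset.map_id']⟩
  · rintro ⟨B, hBA, hcard, rfl⟩
    exact ⟨B.val, val_le_iff.2 hBA, hcard, by rw [sum_eq_multiset_sum, Multiset.map_id']⟩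

theorem sigmaSeqAtLeast_nonempty (h : α ≤ r * #A) : (sigmaSeqAtLeast A r α).Nonempty :=
  ⟨_, mem_sigmaSeqAtLeast.2 ⟨r • A.val, le_rfl, by rwa [Multiset.card_nsmul], rfl⟩⟩

theorem sigmaSeqAtLeast_mono (h : A' ⊆ A) :
    sigmaSeqAtLeast A' r α ⊆ sigmaSeqAtLeast A r α := by
  intro x hx
  obtain ⟨B, hB, hcard, hsum⟩ := mem_sigmaSeqAtLeast.1 hx
  exact mem_sigmaSeqAtLeast.2
    ⟨B, hB.trans (nsmul_le_nsmul_right (val_le_iff.2 h) r), hcard, hsum⟩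

theorem sigmaSeqAtLeast_add_subset {r₁ r₂ α₁ α₂ : ℕ} :
    sigmaSeqAtLeast A r₁ α₁ + sigmaSeqAtLeast A r₂ α₂
      ⊆ sigmaSeqAtLeast A (r₁ + r₂) (α₁ + α₂) := by
  intro z hz
  obtain ⟨x, hx, y, hy, rfl⟩ := mem_add.1 hz
  obtain ⟨B₁, hB₁, hcard₁, rfl⟩ := mem_sigmaSeqAtLeast.1 hx
  obtain ⟨B₂, hB₂, hcard₂, rfl⟩ := mem_sigmaSeqAtLeast.1 hy
  refine mem_sigmaSeqAtLeast.2 ⟨B₁ + B₂, ?_, ?_, Multiset.sum_add _ _⟩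
  · rw [add_nsmul]; exact add_le_add hB₁ hB₂
  · rw [Multiset.card_add]; omega

theorem card_sigmaSeqAtLeast_add_card_le {r₁ r₂ α₁ α₂ : ℕ} (h₁ : α₁ ≤ r₁ * #A)
    (h₂ : α₂ ≤ r₂ * #A) :
    #(sigmaSeqAtLeast A r₁ α₁) + #(sigmaSeqAtLeast A r₂ α₂)
      ≤ #(sigmaSeqAtLeast A (r₁ + r₂) (α₁ + α₂)) + 1 := by
  have hcd := cauchy_davenport_add_of_linearOrder_isCancelAdd
    (sigmaSeqAtLeast_nonempty h₁) (sigmaSeqAtLeast_nonempty h₂)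
  have hsub := card_le_card
    (sigmaSeqAtLeast_add_subset (A := A) (r₁ := r₁) (r₂ := r₂) (α₁ := α₁) (α₂ := α₂))
  omega

/-- If `B ⊆ A.erase a` maximises `a * ∑ B`, then `B ∪ {a}` and the sets obtained from it by
toggling one `x ∈ A.erase a` have pairwise distinct sums (as no `x` is `0` or `-y`), all lying
beyond `Σ_α(A.erase a)` in the direction of `a` (as `|x| < |a|`). -/
theorem card_sigmaSeqAtLeast_erase_add_card_le (hA : ∀ x ∈ A, -x ∉ A) {a : ℤ} (ha : a ∈ A)
    (habs : ∀ x ∈ A.erase a, |x| < |a|) (hα : α ≤ #(A.erase a)) :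
    #(sigmaSeqAtLeast (A.erase a) 1 α) + #A ≤ #(sigmaSeqAtLeast A 1 α) := by
  set A' := A.erase a
  obtain ⟨M, hM, hMmax⟩ := exists_max_image (sigmaSeqAtLeast A' 1 α) (a * ·)
    (sigmaSeqAtLeast_nonempty (by rwa [one_mul]))
  obtain ⟨B, hBA', hBcard, hBsum⟩ := mem_sigmaSeqAtLeast_one.1 hM
  have haB : a ∉ B := fun h => notMem_erase a A (hBA' h)
  have hA'A : A' ⊆ A := erase_subset a A
  let f : ℤ → ℤ := fun x => if x ∈ B then M + a - x else M + a + x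
  have ha0 : a ≠ 0 := by rintro rfl; exact hA 0 ha (by simpa using ha)
  have hax : ∀ x ∈ A', -(a * a) < a * x ∧ a * x < a * a := fun x hx => abs_lt.1 <| by
    rw [abs_mul, ← abs_mul_abs_self a]
    exact mul_lt_mul_of_pos_left (habs x hx) (abs_pos.2 ha0)
  have hfx : ∀ x ∈ A', a * M < a * f x := by
    intro x hx
    obtain ⟨h₁, h₂⟩ := hax x hx
    by_cases hxB : x ∈ B <;> simp only [f, hxB, if_true, if_false] <;> linarith
  have hfmem : ∀ x ∈ A', f x ∈ sigmaSeqAtLeast A 1 α := by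
    intro x hx
    have hxa : x ≠ a := ne_of_mem_erase hx
    rw [mem_sigmaSeqAtLeast_one]
    by_cases hxB : x ∈ B
    · refine ⟨insert a (B.erase x),
        insert_subset ha ((erase_subset x B).trans (hBA'.trans hA'A)), ?_, ?_⟩
      · rw [card_insert_of_notMem (fun h => haB (mem_of_mem_erase h)), card_erase_of_mem hxB]
        omega
      · simp only [f, hxB, if_true]
        rw [sum_insert (fun h => haB (mem_of_mem_erase h)), ← hBsum, ← add_sum_erase B _ hxB]
        ring
    · refine ⟨insert a (insert x B),
        insert_subset ha (insert_subset (hA'A hx) (hBA'.trans hA'A)), ?_, ?_⟩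
      · rw [card_insert_of_notMem (by simp [hxa.symm, haB]), card_insert_of_notMem hxB]
        omega
      · simp only [f, hxB, if_false]
        rw [sum_insert (by simp [hxa.symm, haB]), sum_insert hxB, ← hBsum]
        ring
  have hMa : M + a ∈ sigmaSeqAtLeast A 1 α := by
    refine mem_sigmaSeqAtLeast_one.2 ⟨insert a B, insert_subset ha (hBA'.trans hA'A), ?_, ?_⟩
    · rw [card_insert_of_notMem haB]; omega
    · rw [sum_insert haB, ← hBsum, add_comm]
  have hinj : Set.InjOn f A' := by
    intro x hx y hy hxy
    have hx' := hA'A hx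
    have hy' := hA'A hy
    by_cases hxB : x ∈ B <;> by_cases hyB : y ∈ B <;>
      simp only [f, hxB, hyB, if_true, if_false] at hxy
    · linarith
    · exact (hA y hy' (by rwa [show -y = x by linarith])).elim
    · exact (hA x hx' (by rwa [show -x = y by linarith])).elim
    · linarith
  have hMa_notMem : M + a ∉ A'.image f := by
    intro hmem
    obtain ⟨x, hx, hfx⟩ := mem_image.1 hmem
    have hx0 : x ≠ 0 := by rintro rfl; exact hA 0 (hA'A hx) (by simpa using hA'A hx)
    by_cases hxB : x ∈ B <;> simp only [f, hxB, if_true, if_false] at hfx <;> omega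
  set S := insert (M + a) (A'.image f)
  have hS_gt : ∀ z ∈ S, a * M < a * z := by
    intro z hz
    rcases mem_insert.1 hz with rfl | hz
    · nlinarith [mul_self_pos.2 ha0]
    · obtain ⟨x, hx, rfl⟩ := mem_image.1 hz
      exact hfx x hx
  have hdisj : Disjoint S (sigmaSeqAtLeast A' 1 α) :=
    disjoint_left.2 fun z hz hz' => (hMmax z hz').not_gt (hS_gt z hz)
  have hcardS : #S = #A := by
    rw [card_insert_of_notMem hMa_notMem, card_image_of_injOn hinj, card_erase_add_one ha]
  calc #(sigmaSeqAtLeast A' 1 α) + #A = #(S ∪ sigmaSeqAtLeast A' 1 α) := by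
        rw [card_union_of_disjoint hdisj, hcardS, add_comm]
    _ ≤ #(sigmaSeqAtLeast A 1 α) :=
        card_le_card <| union_subset (insert_subset hMa (image_subset_iff.2 hfmem))
          (sigmaSeqAtLeast_mono hA'A)

theorem le_two_mul_card_sigmaSeqAtLeast_one (hA : ∀ x ∈ A, -x ∉ A) (hα : α ≤ #A) :
    (#A : ℤ) * (#A + 1) - (α + 1) * (α + 2) + 2 * α + 4 ≤ 2 * #(sigmaSeqAtLeast A 1 α) := by
  induction A using Finset.strongInduction with
  | H A ih =>
  rcases hα.eq_or_lt with rfl | hlt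
  · have : (1 : ℤ) ≤ #(sigmaSeqAtLeast A 1 #A) := by
      exact_mod_cast (sigmaSeqAtLeast_nonempty (one_mul _).ge).card_pos
    linarith
  obtain ⟨a, ha, hmax⟩ := A.exists_max_image (|·|) (card_pos.1 (by omega))
  have habs : ∀ x ∈ A.erase a, |x| < |a| := by
    intro x hx
    refine (hmax x (mem_of_mem_erase hx)).lt_of_ne fun h => ?_
    rcases abs_eq_abs.1 h with h | h
    · exact ne_of_mem_erase hx h
    · exact hA a ha (h ▸ mem_of_mem_erase hx)
  have hcard : #(A.erase a) + 1 = #A := card_erase_add_one ha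
  have hrest := ih (A.erase a) (erase_ssubset ha)
    (fun x hx hx' => hA x (mem_of_mem_erase hx) (mem_of_mem_erase hx')) (by omega)
  have hstep := card_sigmaSeqAtLeast_erase_add_card_le (α := α) hA ha habs (by omega)
  rw [← hcard] at hstep ⊢
  push_cast at hrest hstep ⊢
  linarith

theorem le_two_mul_card_sigmaSeqAtLeast (hA : ∀ x ∈ A, -x ∉ A) {j : ℕ} (hj : j < #A) (r : ℕ)
    {s : ℕ} (hs : s ≤ r) :
    (r : ℤ) * (#A * (#A + 1) - (j + 1) * (j + 2)) + 2 * (j + 1) * (r - s) + 2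
      ≤ 2 * #(sigmaSeqAtLeast A r (j * r + s)) := by
  induction r generalizing s with
  | zero =>
    obtain rfl : s = 0 := by omega
    have : (1 : ℤ) ≤ #(sigmaSeqAtLeast A 0 (j * 0 + 0)) := by
      exact_mod_cast (sigmaSeqAtLeast_nonempty (by simp)).card_pos
    push_cast
    linarith
  | succ r ih =>
    rcases s with _ | t
    · have hsum := card_sigmaSeqAtLeast_add_card_le (A := A) (r₁ := r) (r₂ := 1)
        (α₁ := j * r + 0) (α₂ := j) (by nlinarith) (by omega)
      rw [show j * r + 0 + j = j * (r + 1) + 0 by ring] at hsum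
      have h₁ := ih (s := 0) (by omega)
      have h₂ := le_two_mul_card_sigmaSeqAtLeast_one hA hj.le
      push_cast at hsum h₁ h₂ ⊢
      linarith
    · have hsum := card_sigmaSeqAtLeast_add_card_le (A := A) (r₁ := r) (r₂ := 1)
        (α₁ := j * r + t) (α₂ := j + 1) (by nlinarith) (by omega)
      rw [show j * r + t + (j + 1) = j * (r + 1) + (t + 1) by ring] at hsum
      have h₁ := ih (s := t) (by omega)
      have h₂ := le_two_mul_card_sigmaSeqAtLeast_one hA (α := j + 1) hj
      push_cast at hsum h₁ h₂ ⊢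
      linarith

theorem stmt_13_general (k r α m : ℕ) (hmk : m ≤ k)
    (hml : (m - 1) * r ≤ α) (hmu : α < m * r)
    (A : Finset ℤ) (hcard : A.card = k)
    (hA : A ∩ A.image (fun x => -x) = ∅) :
    ((sigmaSeqAtLeast A r α).card : ℤ) ≥
      (r : ℤ) * ((k : ℤ) * ((k : ℤ) + 1) / 2 - (m : ℤ) * ((m : ℤ) + 1) / 2)
        + (m : ℤ) * ((m : ℤ) * (r : ℤ) - (α : ℤ)) + 1 := by
  obtain ⟨j, rfl⟩ : ∃ j, m = j + 1 :=
    Nat.exists_eq_add_one.2 (Nat.pos_of_ne_zero (by rintro rfl; simp at hmu))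
  obtain ⟨s, rfl⟩ : ∃ s, α = j * r + s := ⟨α - j * r, by simp_all⟩
  have hs : s ≤ r := by nlinarith
  have hA' : ∀ x ∈ A, -x ∉ A := fun x hx hx' =>
    disjoint_left.1 (disjoint_iff_inter_eq_empty.2 hA) hx' (mem_image_of_mem _ hx)
  have hbound := le_two_mul_card_sigmaSeqAtLeast hA' (j := j) (by omega) r hs
  obtain ⟨K, hK⟩ := Int.even_mul_succ_self k
  obtain ⟨J, hJ⟩ := Int.even_mul_succ_self (j + 1)
  rw [hcard] at hbound
  push_cast at hbound ⊢
  rw [hK, ← two_mul, Int.mul_ediv_cancel_left _ two_ne_zero, hJ, ← two_mul,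
    Int.mul_ediv_cancel_left _ two_ne_zero]
  rw [hK, show ((j : ℤ) + 1) * (j + 2) = (j + 1) * (j + 1 + 1) by ring, hJ] at hbound
  linarith

theorem stmt_13 (k r α m : ℕ) (hk : 2 ≤ k) (hr : 1 ≤ r)
    (hα : α ≤ r * k - 1) (hm1 : 1 ≤ m) (hmk : m ≤ k)
    (hml : (m - 1) * r ≤ α) (hmu : α < m * r)
    (A : Finset ℤ) (hcard : A.card = k)
    (hA : A ∩ A.image (fun x => -x) = ∅) :
    ((sigmaSeqAtLeast A r α).card : ℤ) ≥
      (r : ℤ) * ((k : ℤ) * ((k : ℤ) + 1) / 2 - (m : ℤ) * ((m : ℤ) + 1) / 2)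
        + (m : ℤ) * ((m : ℤ) * (r : ℤ) - (α : ℤ)) + 1 :=
  stmt_13_general k r α m hmk hml hmu A hcard hA
end
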